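/- arXiv:2211.06550 — 2 statements merged into one kernel-verified Lean document; each statement's English description precedes it below -/
import Mathlib

section
/- Let O be a measurable space, let μ and ν be probability measures on O, and let ε ≥ 0 and δ ≥ 0 be real numbers. Suppose that for every measurable set S ⊆ O we have μ(S) ≤ e^ε · ν(S) + δ. Then for every measurable function f : O → ℝ with 0 ≤ f ≤ 1, we have ∫ f dμ ≤ e^ε · ∫ f dν + δ. -/
open MeasureTheory Set

/-! By the layer cake formula, a measurable `f` with values in `[0, 1]` has
`∫ f dμ = ∫₀¹ μ {f ≥ t} dt`. Applying the hypothesis to each superlevel set `{f ≥ t}` and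
integrating over `t ∈ (0, 1]`, an interval of length one, leaves the additive `δ` unchanged. -/

section Superlevel

variable {α : Type*} [MeasurableSpace α] (μ : Measure α) [IsFiniteMeasure μ]

lemma antitone_measureReal_superlevel (f : α → ℝ) :
    Antitone fun t : ℝ => μ.real {a | t ≤ f a} :=
  fun _ _ hst => measureReal_mono fun _ h => hst.trans h

lemma integrableOn_Ioc_measureReal_superlevel (f : α → ℝ) (M : ℝ) :
    IntegrableOn (fun t : ℝ => μ.real {a | t ≤ f a}) (Ioc 0 M) :=
  ((antitone_measureReal_superlevel μ f).locallyIntegrable.integrableOn_isCompact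
    isCompact_Icc).mono_set Ioc_subset_Icc_self

lemma integral_eq_integral_Ioc_measureReal_superlevel {f : α → ℝ} {M : ℝ} (hf : Measurable f)
    (hf0 : ∀ a, 0 ≤ f a) (hfM : ∀ a, f a ≤ M) :
    ∫ a, f a ∂μ = ∫ t in Ioc 0 M, μ.real {a | t ≤ f a} := by
  have hint : Integrable f μ :=
    .of_bound hf.aestronglyMeasurable M
      (ae_of_all _ fun a => abs_le.mpr ⟨by linarith [hf0 a, hfM a], hfM a⟩)
  exact hint.integral_eq_integral_Ioc_meas_le (ae_of_all _ hf0) (ae_of_all _ hfM)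

end Superlevel

theorem integral_le_mul_integral_add_of_measureReal_le {α : Type*} [MeasurableSpace α]
    {μ ν : Measure α} [IsFiniteMeasure μ] [IsFiniteMeasure ν] {c δ : ℝ}
    (h : ∀ S, MeasurableSet S → μ.real S ≤ c * ν.real S + δ)
    {f : α → ℝ} (hf : Measurable f) (hf0 : ∀ a, 0 ≤ f a) (hf1 : ∀ a, f a ≤ 1) :
    ∫ a, f a ∂μ ≤ c * ∫ a, f a ∂ν + δ := by
  rw [integral_eq_integral_Ioc_measureReal_superlevel μ hf hf0 hf1,
    integral_eq_integral_Ioc_measureReal_superlevel ν hf hf0 hf1]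
  have hν := integrableOn_Ioc_measureReal_superlevel ν f 1
  calc ∫ t in Ioc 0 1, μ.real {a | t ≤ f a}
      ≤ ∫ t in Ioc 0 1, (c * ν.real {a | t ≤ f a} + δ) :=
        setIntegral_mono_on (integrableOn_Ioc_measureReal_superlevel μ f 1)
          ((hν.const_mul c).add (integrable_const δ)) measurableSet_Ioc
          fun t _ => h _ (measurableSet_le measurable_const hf)
    _ = c * (∫ t in Ioc 0 1, ν.real {a | t ≤ f a}) + δ := by
        rw [integral_add (hν.const_mul c) (integrable_const δ), integral_const_mul,
          setIntegral_const]
        simp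

theorem dp_integral_bound_general {O : Type*} [MeasurableSpace O]
    (μ ν : Measure O) [IsProbabilityMeasure μ] [IsProbabilityMeasure ν]
    (ε δ : ℝ)
    (hDP : ∀ S : Set O, MeasurableSet S →
      (μ S).toReal ≤ Real.exp ε * (ν S).toReal + δ)
    (f : O → ℝ) (hf : Measurable f) (hf0 : ∀ o, 0 ≤ f o) (hf1 : ∀ o, f o ≤ 1) :
    ∫ o, f o ∂μ ≤ Real.exp ε * ∫ o, f o ∂ν + δ :=
  integral_le_mul_integral_add_of_measureReal_le hDP hf hf0 hf1

/-- If the pair of probability measures (μ, ν) satisfies the (ε,δ)-DP inequality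
μ(S) ≤ e^ε · ν(S) + δ for every measurable set S, then for every measurable
attacker f : O → [0,1] we have ∫ f dμ ≤ e^ε · ∫ f dν + δ. -/
theorem dp_integral_bound {O : Type*} [MeasurableSpace O]
    (μ ν : Measure O) [IsProbabilityMeasure μ] [IsProbabilityMeasure ν]
    (ε δ : ℝ) (hε : 0 ≤ ε) (hδ : 0 ≤ δ)
    (hDP : ∀ S : Set O, MeasurableSet S →
      (μ S).toReal ≤ Real.exp ε * (ν S).toReal + δ)
    (f : O → ℝ) (hf : Measurable f) (hf0 : ∀ o, 0 ≤ f o) (hf1 : ∀ o, f o ≤ 1) :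
    ∫ o, f o ∂μ ≤ Real.exp ε * ∫ o, f o ∂ν + δ :=
  dp_integral_bound_general μ ν ε δ hDP f hf hf0 hf1
end

section
/- Let O be a measurable space, let μ and ν be probability measures on O, and let ε ≥ 0 and δ ≥ 0. Suppose that for every measurable set S ⊆ O we have ν(S) ≤ e^ε · μ(S) + δ. Then for every measurable function f : O → ℝ with 0 ≤ f ≤ 1, setting TP = ∫ f dμ and FP = ∫ f dν, we have 1 − FP − δ ≤ e^ε · (1 − TP). -/
/-!
By the layer-cake formula, the integral of a `[0,1]`-valued function `g` is
`∫ t in (0,1], ρ {g ≥ t}`. Applying the DP inequality to every superlevel set and integrating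
over `t ∈ (0,1]` gives `∫ g dν ≤ e^ε ∫ g dμ + δ`; the theorem is this for `g = 1 - f`.
-/

open MeasureTheory Set

section

variable {O : Type*} [MeasurableSpace O]

lemma integrableOn_measureReal_superlevel (ρ : Measure O) [IsFiniteMeasure ρ] (g : O → ℝ)
    (a b : ℝ) : IntegrableOn (fun t ↦ ρ.real {o | t ≤ g o}) (Ioc a b) := by
  have hanti : Antitone fun t ↦ ρ.real {o | t ≤ g o} := fun s t hst ↦
    measureReal_mono fun o ho ↦ hst.trans ho
  refine IntegrableOn.of_bound measure_Ioc_lt_top hanti.measurable.aestronglyMeasurable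
    (ρ.real univ) (Filter.Eventually.of_forall fun t ↦ ?_)
  rw [Real.norm_of_nonneg measureReal_nonneg]
  exact measureReal_mono (subset_univ _)

lemma integrable_of_mem_unitInterval (ρ : Measure O) [IsFiniteMeasure ρ] {g : O → ℝ}
    (hg : Measurable g) (hg0 : ∀ o, 0 ≤ g o) (hg1 : ∀ o, g o ≤ 1) : Integrable g ρ :=
  Integrable.of_bound hg.aestronglyMeasurable 1 (Filter.Eventually.of_forall fun o ↦ by
    rw [Real.norm_of_nonneg (hg0 o)]; exact hg1 o)

lemma integral_le_mul_integral_add_of_measureReal_le_s2 (μ ν : Measure O) [IsFiniteMeasure μ]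
    [IsFiniteMeasure ν] (c δ : ℝ)
    (hμν : ∀ S : Set O, MeasurableSet S → ν.real S ≤ c * μ.real S + δ)
    {g : O → ℝ} (hg : Measurable g) (hg0 : ∀ o, 0 ≤ g o) (hg1 : ∀ o, g o ≤ 1) :
    ∫ o, g o ∂ν ≤ c * (∫ o, g o ∂μ) + δ := by
  have layer_cake : ∀ (ρ : Measure O) [IsFiniteMeasure ρ],
      ∫ o, g o ∂ρ = ∫ t in Ioc 0 1, ρ.real {o | t ≤ g o} := fun ρ _ ↦
    (integrable_of_mem_unitInterval ρ hg hg0 hg1).integral_eq_integral_Ioc_meas_le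
      (Filter.Eventually.of_forall hg0) (Filter.Eventually.of_forall hg1)
  have hconst : IntegrableOn (fun _ ↦ δ) (Ioc (0 : ℝ) 1) := integrableOn_const measure_Ioc_lt_top.ne
  have hμ := integrableOn_measureReal_superlevel μ g 0 1
  calc ∫ o, g o ∂ν = ∫ t in Ioc 0 1, ν.real {o | t ≤ g o} := layer_cake ν
    _ ≤ ∫ t in Ioc 0 1, (c * μ.real {o | t ≤ g o} + δ) :=
      setIntegral_mono_on (integrableOn_measureReal_superlevel ν g 0 1)
        ((hμ.const_mul c).add hconst) measurableSet_Ioc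
        fun t _ ↦ hμν _ (hg measurableSet_Ici)
    _ = c * (∫ t in Ioc 0 1, μ.real {o | t ≤ g o}) + δ := by
      rw [integral_add (hμ.const_mul c) hconst, integral_const_mul, setIntegral_const]
      simp
    _ = c * (∫ o, g o ∂μ) + δ := by rw [layer_cake μ]

lemma integral_one_sub_of_mem_unitInterval (ρ : Measure O) [IsProbabilityMeasure ρ]
    {f : O → ℝ} (hf : Measurable f) (hf0 : ∀ o, 0 ≤ f o) (hf1 : ∀ o, f o ≤ 1) :
    ∫ o, (1 - f o) ∂ρ = 1 - ∫ o, f o ∂ρ := by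
  rw [integral_sub (integrable_const 1) (integrable_of_mem_unitInterval ρ hf hf0 hf1)]
  simp

end

theorem dp_tn_fn_bound_general {O : Type*} [MeasurableSpace O]
    (μ ν : Measure O) [IsProbabilityMeasure μ] [IsProbabilityMeasure ν]
    (ε δ : ℝ)
    (hDP : ∀ S : Set O, MeasurableSet S →
      (ν S).toReal ≤ Real.exp ε * (μ S).toReal + δ)
    (f : O → ℝ) (hf : Measurable f) (hf0 : ∀ o, 0 ≤ f o) (hf1 : ∀ o, f o ≤ 1) :
    1 - (∫ o, f o ∂ν) - δ ≤ Real.exp ε * (1 - ∫ o, f o ∂μ) := by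
  have h := integral_le_mul_integral_add_of_measureReal_le_s2 μ ν (Real.exp ε) δ hDP
    (g := fun o ↦ 1 - f o) (measurable_const.sub hf) (fun o ↦ sub_nonneg.mpr (hf1 o))
    (fun o ↦ sub_le_self 1 (hf0 o))
  rw [integral_one_sub_of_mem_unitInterval ν hf hf0 hf1,
    integral_one_sub_of_mem_unitInterval μ hf hf0 hf1] at h
  linarith

/-- If (ν, μ) satisfies the (ε,δ)-DP inequality ν(S) ≤ e^ε · μ(S) + δ for all
measurable S, then for every measurable attacker f : O → [0,1], with
TP = ∫ f dμ and FP = ∫ f dν, we have 1 − FP − δ ≤ e^ε · (1 − TP). -/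
theorem dp_tn_fn_bound {O : Type*} [MeasurableSpace O]
    (μ ν : Measure O) [IsProbabilityMeasure μ] [IsProbabilityMeasure ν]
    (ε δ : ℝ) (hε : 0 ≤ ε) (hδ : 0 ≤ δ)
    (hDP : ∀ S : Set O, MeasurableSet S →
      (ν S).toReal ≤ Real.exp ε * (μ S).toReal + δ)
    (f : O → ℝ) (hf : Measurable f) (hf0 : ∀ o, 0 ≤ f o) (hf1 : ∀ o, f o ≤ 1) :
    1 - (∫ o, f o ∂ν) - δ ≤ Real.exp ε * (1 - ∫ o, f o ∂μ) :=
  dp_tn_fn_bound_general μ ν ε δ hDP f hf hf0 hf1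
end
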